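/- Let f and g be non-identically-vanishing slice regular functions on a symmetric slice domain Ω ⊆ 𝕆. Then (f∗g)^s = f^s g^s = g^s f^s on Ω, where ∗ is the regular product and ^s the symmetrization. -/

import Mathlib

noncomputable section

open Quaternion

/-- The octonions, realized via the Cayley–Dickson construction over the quaternions. -/
abbrev Octo := ℍ[ℝ] × ℍ[ℝ]

namespace Octo

/-- Octonion multiplication (Cayley–Dickson): (z₁,z₂)(w₁,w₂) = (z₁w₁ - w̄₂z₂, z₂w̄₁ + w₂z₁). -/
def mul' (z w : Octo) : Octo :=
  (z.1 * w.1 - star w.2 * z.2, z.2 * star w.1 + w.2 * z.1)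

/-- Octonionic conjugation. -/
def conj' (x : Octo) : Octo := (star x.1, -x.2)

/-- The multiplicative unit of the octonions. -/
def one' : Octo := (1, 0)

/-- The embedding of the reals into the octonions. -/
def emb (x : ℝ) : Octo := (algebraMap ℝ ℍ[ℝ] x, 0)

/-- The real part of an octonion. -/
def re' (x : Octo) : ℝ := x.1.re

/-- The imaginary part of an octonion. -/
def im' (x : Octo) : Octo := x - emb (re' x)

/-- The standard Euclidean inner product on 𝕆 ≅ ℝ⁸. -/
def inner' (x y : Octo) : ℝ := (inner ℝ x.1 y.1 : ℝ) + (inner ℝ x.2 y.2 : ℝ)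

/-- The Euclidean norm on the octonions. -/
def norm' (x : Octo) : ℝ := Real.sqrt (inner' x x)

/-- The multiplicative inverse of a nonzero octonion. -/
def inv' (x : Octo) : Octo := (inner' x x)⁻¹ • conj' x

/-- The associator [u,v,w] = (uv)w - u(vw). -/
def assoc' (u v w : Octo) : Octo := mul' (mul' u v) w - mul' u (mul' v w)

/-- n-th power of an octonion. -/
def pow' (x : Octo) : ℕ → Octo
  | 0 => one'
  | n + 1 => mul' x (pow' x n)

/-- A purely imaginary unit octonion: I ∈ 𝕊 iff I² = -1. -/
def IsImUnit (I : Octo) : Prop := mul' I I = - one'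

/-- The point x + yI on the slice ℂ_I. -/
def pt (I : Octo) (p : ℝ × ℝ) : Octo := emb p.1 + p.2 • I

/-- The slice ℂ_I = ℝ ⊕ Iℝ. -/
def sliceSet (I : Octo) : Set Octo := {z | ∃ p : ℝ × ℝ, z = pt I p}

/-- e^{θI} = cos θ + (sin θ) I. -/
def expI (θ : ℝ) (I : Octo) : Octo := emb (Real.cos θ) + Real.sin θ • I

/-- Slice regularity: on every slice ℂ_I the function is holomorphic, i.e. real
differentiable with ∂f/∂x + I ∂f/∂y = 0. -/
def SliceRegular (Ω : Set Octo) (f : Octo → Octo) : Prop :=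
  ∀ I, IsImUnit I → ∀ p : ℝ × ℝ, pt I p ∈ Ω →
    ∃ fx fy : Octo,
      HasFDerivAt (fun q : ℝ × ℝ => f (pt I q))
        ((ContinuousLinearMap.fst ℝ ℝ ℝ).smulRight fx
          + (ContinuousLinearMap.snd ℝ ℝ ℝ).smulRight fy) p
      ∧ fx + mul' I fy = 0

/-- Symmetric slice domain: open, connected, meeting the real axis, with each slice a
domain, and axially symmetric. -/
def SymSliceDomain (Ω : Set Octo) : Prop :=
  IsOpen Ω ∧ IsConnected Ω ∧ (∃ x : ℝ, emb x ∈ Ω) ∧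
  (∀ I, IsImUnit I → IsConnected {p : ℝ × ℝ | pt I p ∈ Ω}) ∧
  (∀ I J, IsImUnit I → IsImUnit J → ∀ p : ℝ × ℝ, pt I p ∈ Ω → pt J p ∈ Ω)

/-- The open unit ball 𝔹 of the octonions. -/
def ball1 : Set Octo := {z | norm' z < 1}

end Octo

/-! The slice `ℂ_I = ℝ + ℝI` is a copy of `ℂ` (via `sliceEmb I`). For any `a`, the real-linear
map `sliceCoord a I : v ↦ ⟨a, v⟩ - i ⟨a, I v⟩` turns left multiplication by `I` into
multiplication by `i`, so it turns the restriction to `ℂ_I` of a slice regular function into a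
holomorphic function. Symmetrizations are real on the real axis; the identity principle applied
to `sliceCoord a I ∘ F`, with `a` the component of `F z` orthogonal to `ℂ_I`, shows that they map
`ℂ_I` into itself. On `ℂ_I` the map `T = sliceCoord 1 I` inverts `sliceEmb I`, so
`T ps - T fs * T gs` is holomorphic and vanishes on the reals, where `ps = |f|²|g|² = fs gs`.
Hence it vanishes on the whole slice, and `fs`, `gs` commute there because `ℂ_I` is
commutative. -/

open Filter Topology in
theorem DifferentiableOn.eqOn_zero_of_preconnected_of_real {U : Set ℂ} {u : ℂ → ℂ}
    (hu : DifferentiableOn ℂ u U) (hU : IsOpen U) (hUc : IsPreconnected U) {x₀ : ℝ}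
    (hx₀ : (x₀ : ℂ) ∈ U) (hreal : ∀ x : ℝ, (x : ℂ) ∈ U → u x = 0) :
    Set.EqOn u 0 U := by
  have hnear : ∀ᶠ x : ℝ in 𝓝 x₀, u x = 0 :=
    eventually_of_mem ((hU.preimage Complex.continuous_ofReal).mem_nhds hx₀) hreal
  have hto : Tendsto Complex.ofReal (𝓝[≠] x₀) (𝓝[≠] (x₀ : ℂ)) :=
    Complex.continuous_ofReal.continuousWithinAt.tendsto_nhdsWithin
      fun x hx => Complex.ofReal_injective.ne hx
  exact (hu.analyticOnNhd hU).eqOn_zero_of_preconnected_of_frequently_eq_zero hUc hx₀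
    (hto.frequently (hnear.filter_mono nhdsWithin_le_nhds).frequently)

namespace Octo

lemma mul'_add_left (x y z : Octo) : mul' (x + y) z = mul' x z + mul' y z := by
  ext1 <;> simp only [mul', Prod.fst_add, Prod.snd_add] <;> noncomm_ring

lemma mul'_add_right (x y z : Octo) : mul' x (y + z) = mul' x y + mul' x z := by
  ext1 <;> simp only [mul', Prod.fst_add, Prod.snd_add, star_add] <;> noncomm_ring

lemma mul'_smul_left (r : ℝ) (x y : Octo) : mul' (r • x) y = r • mul' x y := by
  ext1 <;> simp only [mul', Prod.smul_fst, Prod.smul_snd, smul_mul_assoc, mul_smul_comm,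
    smul_sub, smul_add]

lemma mul'_smul_right (r : ℝ) (x y : Octo) : mul' x (r • y) = r • mul' x y := by
  ext1 <;> simp only [mul', Prod.smul_fst, Prod.smul_snd, Quaternion.star_smul, smul_mul_assoc,
    mul_smul_comm, smul_sub, smul_add]

lemma mul'_neg_right (x y : Octo) : mul' x (-y) = -mul' x y := by
  simpa using mul'_smul_right (-1) x y

@[simp] lemma mul'_one' (x : Octo) : mul' x one' = x := by simp [mul', one']

@[simp] lemma one'_mul' (x : Octo) : mul' one' x = x := by simp [mul', one']

lemma mul'_mul'_self_left (x y : Octo) : mul' x (mul' x y) = mul' (mul' x x) y := by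
  ext1 <;> ext <;>
    simp only [mul', star_mul, star_star, star_sub, star_add,
      re_sub, imI_sub, imJ_sub, imK_sub, re_add, imI_add, imJ_add, imK_add,
      re_mul, imI_mul, imJ_mul, imK_mul, re_star, imI_star, imJ_star, imK_star] <;> ring

lemma inner'_eq (x y : Octo) : inner' x y =
    x.1.re * y.1.re + x.1.imI * y.1.imI + x.1.imJ * y.1.imJ + x.1.imK * y.1.imK +
      (x.2.re * y.2.re + x.2.imI * y.2.imI + x.2.imJ * y.2.imJ + x.2.imK * y.2.imK) := by
  simp only [inner', Quaternion.inner_def, re_mul, re_star, imI_star, imJ_star, imK_star]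
  ring

lemma inner'_comm (x y : Octo) : inner' x y = inner' y x := by
  simp only [inner'_eq]; ring

lemma inner'_add_right (x y z : Octo) : inner' x (y + z) = inner' x y + inner' x z := by
  simp only [inner'_eq, Prod.fst_add, Prod.snd_add, re_add, imI_add, imJ_add, imK_add]; ring

lemma inner'_sub_right (x y z : Octo) : inner' x (y - z) = inner' x y - inner' x z := by
  simp only [inner'_eq, Prod.fst_sub, Prod.snd_sub, re_sub, imI_sub, imJ_sub, imK_sub]; ring

@[simp] lemma inner'_neg_right (x y : Octo) : inner' x (-y) = -inner' x y := by
  simp only [inner'_eq, Prod.fst_neg, Prod.snd_neg, re_neg, imI_neg, imJ_neg, imK_neg]; ring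

lemma inner'_smul_right (r : ℝ) (x y : Octo) : inner' x (r • y) = r * inner' x y := by
  simp only [inner'_eq, Prod.smul_fst, Prod.smul_snd, re_smul, imI_smul, imJ_smul, imK_smul,
    smul_eq_mul]
  ring

@[simp] lemma inner'_zero_left (x : Octo) : inner' 0 x = 0 := by simp [inner'_eq]

lemma inner'_one'_left (x : Octo) : inner' one' x = re' x := by simp [inner'_eq, one', re']

@[simp] lemma re'_one' : re' one' = 1 := by simp [re', one']

lemma inner'_self_nonneg (x : Octo) : 0 ≤ inner' x x :=
  add_nonneg real_inner_self_nonneg real_inner_self_nonneg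

lemma inner'_self_eq_zero {x : Octo} : inner' x x = 0 ↔ x = 0 := by
  refine ⟨fun h => ?_, fun h => by simp [h]⟩
  obtain ⟨h₁, h₂⟩ :=
    (add_eq_zero_iff_of_nonneg real_inner_self_nonneg real_inner_self_nonneg).mp h
  exact Prod.ext (inner_self_eq_zero.mp h₁) (inner_self_eq_zero.mp h₂)

lemma mul'_self (x : Octo) : mul' x x = (2 * re' x) • x - inner' x x • one' := by
  ext1 <;> ext <;>
    simp only [mul', re', inner'_eq, one', Prod.smul_mk, Prod.fst_sub, Prod.snd_sub,
      Prod.smul_fst, Prod.smul_snd, smul_zero, sub_zero, smul_eq_mul,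
      re_sub, imI_sub, imJ_sub, imK_sub, re_add, imI_add, imJ_add, imK_add,
      re_mul, imI_mul, imJ_mul, imK_mul, re_star, imI_star, imJ_star, imK_star,
      re_smul, imI_smul, imJ_smul, imK_smul, re_one, imI_one, imJ_one, imK_one] <;> ring

lemma mul'_conj'_self (x : Octo) : mul' x (conj' x) = emb (inner' x x) := by
  ext1 <;> ext <;>
    simp only [mul', conj', emb, inner'_eq, Quaternion.algebraMap_def, star_neg, star_star,
      mul_neg, neg_mul, re_neg, imI_neg, imJ_neg, imK_neg,
      re_sub, imI_sub, imJ_sub, imK_sub, re_add, imI_add, imJ_add, imK_add,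
      re_mul, imI_mul, imJ_mul, imK_mul, re_star, imI_star, imJ_star, imK_star,
      re_coe, imI_coe, imJ_coe, imK_coe, re_zero, imI_zero, imJ_zero, imK_zero] <;> ring

lemma mul'_emb_emb (r s : ℝ) : mul' (emb r) (emb s) = emb (r * s) := by
  ext1 <;> simp [mul', emb, Algebra.algebraMap_eq_smul_one, smul_smul, mul_comm]

lemma inner'_mul'_self (x y : Octo) :
    inner' (mul' x y) (mul' x y) = inner' x x * inner' y y := by
  simp only [mul', inner'_eq, re_sub, imI_sub, imJ_sub, imK_sub, re_add, imI_add, imJ_add, imK_add,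
    re_mul, imI_mul, imJ_mul, imK_mul, re_star, imI_star, imJ_star, imK_star]
  ring

lemma IsImUnit.inner'_self {I : Octo} (hI : IsImUnit I) : inner' I I = 1 := by
  have h := inner'_mul'_self I I
  rw [hI, show inner' (-one') (-one') = 1 by simp [inner'_eq, one']] at h
  exact (mul_self_eq_one_iff.mp h.symm).resolve_right
    (by linarith [inner'_self_nonneg I])

lemma IsImUnit.re'_eq_zero {I : Octo} (hI : IsImUnit I) : re' I = 0 := by
  have h := mul'_self I
  rw [hI, hI.inner'_self, one_smul, eq_sub_iff_add_eq, neg_add_cancel, eq_comm, smul_eq_zero] at h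
  have hI0 : I ≠ 0 := by rintro rfl; simpa using hI.inner'_self
  simpa [hI0] using h

lemma isImUnit_of_re'_eq_zero {I : Octo} (hre : re' I = 0) (hnorm : inner' I I = 1) :
    IsImUnit I := by
  rw [IsImUnit, mul'_self, hre, hnorm]; simp

lemma inner'_one'_isImUnit {I : Octo} (hI : IsImUnit I) : inner' one' I = 0 := by
  rw [inner'_one'_left, hI.re'_eq_zero]

lemma IsImUnit.mul'_mul' {I : Octo} (hI : IsImUnit I) (y : Octo) : mul' I (mul' I y) = -y := by
  rw [mul'_mul'_self_left, hI, show -one' = (-1 : ℝ) • one' by simp, mul'_smul_left]; simp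

def sliceEmb (I : Octo) (ζ : ℂ) : Octo := pt I (ζ.re, ζ.im)

lemma sliceEmb_eq (I : Octo) (ζ : ℂ) : sliceEmb I ζ = ζ.re • one' + ζ.im • I := by
  ext1 <;> simp [sliceEmb, pt, emb, one', Algebra.algebraMap_eq_smul_one]

@[simp] lemma sliceEmb_ofReal (I : Octo) (x : ℝ) : sliceEmb I x = emb x := by
  simp [sliceEmb, pt]

@[simp] lemma sliceEmb_I (I : Octo) : sliceEmb I Complex.I = I := by
  simp [sliceEmb_eq]

lemma continuous_sliceEmb (I : Octo) : Continuous (sliceEmb I) := by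
  rw [show sliceEmb I = fun ζ => ζ.re • one' + ζ.im • I from funext (sliceEmb_eq I)]
  fun_prop

lemma mul'_sliceEmb {I : Octo} (hI : IsImUnit I) (ζ η : ℂ) :
    mul' (sliceEmb I ζ) (sliceEmb I η) = sliceEmb I (ζ * η) := by
  simp only [sliceEmb_eq, mul'_add_left, mul'_add_right, mul'_smul_left, mul'_smul_right,
    mul'_one', one'_mul', show mul' I I = -one' from hI, Complex.mul_re, Complex.mul_im]
  module

lemma IsImUnit.mul'_sliceEmb {I : Octo} (hI : IsImUnit I) (ζ : ℂ) :
    mul' I (sliceEmb I ζ) = sliceEmb I (Complex.I * ζ) := by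
  simpa using Octo.mul'_sliceEmb hI Complex.I ζ

lemma inner'_one'_sliceEmb {I : Octo} (hI : IsImUnit I) (ζ : ℂ) :
    inner' one' (sliceEmb I ζ) = ζ.re := by
  simp [sliceEmb_eq, inner'_add_right, inner'_smul_right, inner'_one'_left, hI.re'_eq_zero]

lemma inner'_sliceEmb {I : Octo} (hI : IsImUnit I) (ζ : ℂ) :
    inner' I (sliceEmb I ζ) = ζ.im := by
  simp [sliceEmb_eq, inner'_add_right, inner'_smul_right, inner'_comm I one',
    inner'_one'_isImUnit hI, hI.inner'_self]

lemma inner'_sub_sliceEmb {I : Octo} (hI : IsImUnit I) (v : Octo) (η : ℂ) :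
    inner' (v - sliceEmb I ⟨inner' one' v, inner' I v⟩) (sliceEmb I η) = 0 := by
  have hη : ∀ x, inner' x (sliceEmb I η) = η.re * inner' one' x + η.im * inner' I x := by
    intro x
    rw [sliceEmb_eq, inner'_add_right, inner'_smul_right, inner'_smul_right, inner'_comm x,
      inner'_comm x]
  rw [hη, inner'_sub_right, inner'_sub_right, inner'_one'_sliceEmb hI, inner'_sliceEmb hI]
  ring

lemma exists_isImUnit_sliceEmb_eq (w : Octo) : ∃ I, IsImUnit I ∧ ∃ ζ, sliceEmb I ζ = w := by
  have hw : emb (re' w) + im' w = w := add_sub_cancel _ _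
  by_cases him : im' w = 0
  · refine ⟨(0, 1), isImUnit_of_re'_eq_zero (by simp [re']) (by simp [inner'_eq]), re' w, ?_⟩
    simpa [him] using hw
  set n := √(inner' (im' w) (im' w))
  have hn : 0 < n := Real.sqrt_pos.mpr
    ((inner'_self_nonneg _).lt_of_ne' (inner'_self_eq_zero.not.mpr him))
  refine ⟨n⁻¹ • im' w, isImUnit_of_re'_eq_zero ?_ ?_, ⟨re' w, n⟩, ?_⟩
  · simp [re', im', emb]
  · have hn2 : n ^ 2 = inner' (im' w) (im' w) := Real.sq_sqrt (inner'_self_nonneg _)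
    rw [inner'_smul_right, inner'_comm, inner'_smul_right, ← hn2]
    field_simp
  · rw [sliceEmb, pt, smul_smul, mul_inv_cancel₀ hn.ne', one_smul, hw]

def sliceCoord (a I : Octo) : Octo →L[ℝ] ℂ :=
  LinearMap.toContinuousLinearMap
    { toFun := fun v => ⟨inner' a v, -inner' a (mul' I v)⟩
      map_add' := fun v w => Complex.ext (by simp only [inner'_add_right, Complex.add_re])
        (by simp only [mul'_add_right, inner'_add_right, Complex.add_im]; ring)
      map_smul' := fun r v => by
        apply Complex.ext <;> simp [inner'_smul_right, mul'_smul_right] }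

lemma sliceCoord_apply (a I v : Octo) :
    sliceCoord a I v = ⟨inner' a v, -inner' a (mul' I v)⟩ := rfl

lemma sliceCoord_mul' {I : Octo} (hI : IsImUnit I) (a v : Octo) :
    sliceCoord a I (mul' I v) = Complex.I * sliceCoord a I v := by
  apply Complex.ext <;> simp [sliceCoord_apply, hI.mul'_mul']

lemma sliceCoord_sliceEmb {I : Octo} (hI : IsImUnit I) (a : Octo) (ζ : ℂ) :
    sliceCoord a I (sliceEmb I ζ) =
      ⟨inner' a (sliceEmb I ζ), -inner' a (sliceEmb I (Complex.I * ζ))⟩ := by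
  rw [sliceCoord_apply, hI.mul'_sliceEmb]

lemma sliceCoord_one'_sliceEmb {I : Octo} (hI : IsImUnit I) (ζ : ℂ) :
    sliceCoord one' I (sliceEmb I ζ) = ζ := by
  apply Complex.ext <;> simp [sliceCoord_sliceEmb hI, inner'_one'_sliceEmb hI]

lemma sliceCoord_one'_emb {I : Octo} (hI : IsImUnit I) (r : ℝ) :
    sliceCoord one' I (emb r) = r := by
  rw [← sliceEmb_ofReal I, sliceCoord_one'_sliceEmb hI]

lemma SliceRegular.differentiableOn_sliceCoord {Ω : Set Octo} {F : Octo → Octo}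
    (hF : SliceRegular Ω F) {I : Octo} (hI : IsImUnit I) (a : Octo) :
    DifferentiableOn ℂ (fun ζ => sliceCoord a I (F (sliceEmb I ζ))) (sliceEmb I ⁻¹' Ω) := by
  intro ζ hζ
  obtain ⟨fx, fy, hF', hCR⟩ := hF I hI (ζ.re, ζ.im) hζ
  have hfy : mul' I fx = fy := by
    rw [eq_neg_of_add_eq_zero_left hCR, mul'_neg_right, hI.mul'_mul', neg_neg]
  have hD := (sliceCoord a I).hasFDerivAt.comp ζ
    (hF'.comp ζ Complex.equivRealProdCLM.toContinuousLinearMap.hasFDerivAt)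
  refine (hD.complexOfReal_hasFDerivAt ?_).differentiableAt.differentiableWithinAt
  simp [← hfy, sliceCoord_mul' hI]

lemma SymSliceDomain.eqOn_zero_of_real {Ω : Set Octo} (hΩ : SymSliceDomain Ω) {I : Octo}
    (hI : IsImUnit I) {u : ℂ → ℂ} (hu : DifferentiableOn ℂ u (sliceEmb I ⁻¹' Ω))
    (hreal : ∀ x : ℝ, emb x ∈ Ω → u x = 0) : Set.EqOn u 0 (sliceEmb I ⁻¹' Ω) := by
  obtain ⟨hopen, -, ⟨x₀, hx₀⟩, hslice, -⟩ := hΩ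
  have hconn : IsPreconnected (sliceEmb I ⁻¹' Ω) :=
    Complex.equivRealProdCLM.toHomeomorph.isPreconnected_preimage.mpr
      (hslice I hI).isPreconnected
  exact hu.eqOn_zero_of_preconnected_of_real (hopen.preimage (continuous_sliceEmb I)) hconn
    (x₀ := x₀) (by simpa using hx₀) fun x hx => hreal x (by simpa using hx)

lemma SliceRegular.apply_sliceEmb_mem_range {Ω : Set Octo} (hΩ : SymSliceDomain Ω)
    {F : Octo → Octo} (hF : SliceRegular Ω F)
    (hreal : ∀ x : ℝ, emb x ∈ Ω → ∃ r : ℝ, F (emb x) = emb r)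
    {I : Octo} (hI : IsImUnit I) {ζ : ℂ} (hζ : sliceEmb I ζ ∈ Ω) :
    F (sliceEmb I ζ) ∈ Set.range (sliceEmb I) := by
  set v := F (sliceEmb I ζ)
  set a := v - sliceEmb I ⟨inner' one' v, inner' I v⟩
  have horth : ∀ η, inner' a (sliceEmb I η) = 0 := inner'_sub_sliceEmb hI v
  have hav : sliceCoord a I v = 0 := by
    refine hΩ.eqOn_zero_of_real hI (hF.differentiableOn_sliceCoord hI a) (fun x hx => ?_) hζ
    obtain ⟨r, hr⟩ := hreal x hx
    rw [sliceEmb_ofReal, hr, ← sliceEmb_ofReal I, sliceCoord_sliceEmb hI, horth, horth]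
    simp [Complex.ext_iff]
  have haa : inner' a a = 0 :=
    calc inner' a a = inner' a v - inner' a (sliceEmb I _) := inner'_sub_right _ _ _
      _ = 0 := by simpa [horth, sliceCoord_apply] using congrArg Complex.re hav
  exact ⟨_, (sub_eq_zero.mp (inner'_self_eq_zero.mp haa)).symm⟩

lemma SliceRegular.eq_mul'_of_real {Ω : Set Octo} (hΩ : SymSliceDomain Ω) {F G H : Octo → Octo}
    (hF : SliceRegular Ω F) (hG : SliceRegular Ω G) (hH : SliceRegular Ω H)
    (hF_real : ∀ x : ℝ, emb x ∈ Ω → ∃ r : ℝ, F (emb x) = emb r)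
    (hG_real : ∀ x : ℝ, emb x ∈ Ω → ∃ r : ℝ, G (emb x) = emb r)
    (hH_eq : ∀ x : ℝ, emb x ∈ Ω → H (emb x) = mul' (F (emb x)) (G (emb x)))
    {w : Octo} (hw : w ∈ Ω) :
    H w = mul' (F w) (G w) ∧ mul' (F w) (G w) = mul' (G w) (F w) := by
  obtain ⟨I, hI, ζ, rfl⟩ := exists_isImUnit_sliceEmb_eq w
  have hFG_real (x : ℝ) (hx : emb x ∈ Ω) : ∃ r s : ℝ,
      F (emb x) = emb r ∧ G (emb x) = emb s ∧ H (emb x) = emb (r * s) := by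
    obtain ⟨r, hr⟩ := hF_real x hx
    obtain ⟨s, hs⟩ := hG_real x hx
    exact ⟨r, s, hr, hs, by rw [hH_eq x hx, hr, hs, mul'_emb_emb]⟩
  obtain ⟨φ, hφ⟩ := hF.apply_sliceEmb_mem_range hΩ hF_real hI hw
  obtain ⟨γ, hγ⟩ := hG.apply_sliceEmb_mem_range hΩ hG_real hI hw
  obtain ⟨π, hπ⟩ := hH.apply_sliceEmb_mem_range hΩ (fun x hx => by
    obtain ⟨r, s, -, -, hrs⟩ := hFG_real x hx
    exact ⟨_, hrs⟩) hI hw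
  have hπ_eq : π = φ * γ := by
    have h := hΩ.eqOn_zero_of_real hI ((hH.differentiableOn_sliceCoord hI one').sub
      ((hF.differentiableOn_sliceCoord hI one').mul (hG.differentiableOn_sliceCoord hI one')))
      (fun x hx => by
        obtain ⟨r, s, hr, hs, hrs⟩ := hFG_real x hx
        simp only [Pi.sub_apply, Pi.mul_apply, sliceEmb_ofReal, hr, hs, hrs,
          sliceCoord_one'_emb hI, Complex.ofReal_mul, sub_self]) hw
    simpa [← hφ, ← hγ, ← hπ, sliceCoord_one'_sliceEmb hI, sub_eq_zero] using h
  rw [← hφ, ← hγ, ← hπ, mul'_sliceEmb hI, mul'_sliceEmb hI, hπ_eq, mul_comm]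
  exact ⟨rfl, rfl⟩

end Octo

open Octo in
/-- `p` stands for `f ∗ g` and `fs`, `gs`, `ps` for the symmetrizations: slice regular functions on
a symmetric slice domain are determined by their values on the real axis, which is how they are
specified here. -/
theorem symmetrization_regular_product_general (Ω : Set Octo) (hΩ : SymSliceDomain Ω)
    (f g p fs gs ps : Octo → Octo)
    (hfs : SliceRegular Ω fs) (hgs : SliceRegular Ω gs) (hps : SliceRegular Ω ps)
    (hprod : ∀ x : ℝ, emb x ∈ Ω → p (emb x) = mul' (f (emb x)) (g (emb x)))
    (hfs0 : ∀ x : ℝ, emb x ∈ Ω → fs (emb x) = mul' (f (emb x)) (conj' (f (emb x))))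
    (hgs0 : ∀ x : ℝ, emb x ∈ Ω → gs (emb x) = mul' (g (emb x)) (conj' (g (emb x))))
    (hps0 : ∀ x : ℝ, emb x ∈ Ω → ps (emb x) = mul' (p (emb x)) (conj' (p (emb x)))) :
    ∀ w ∈ Ω, ps w = mul' (fs w) (gs w) ∧ mul' (fs w) (gs w) = mul' (gs w) (fs w) := by
  intro w hw
  have hfs_real (x : ℝ) (hx : emb x ∈ Ω) :
      fs (emb x) = emb (inner' (f (emb x)) (f (emb x))) := by
    rw [hfs0 x hx, mul'_conj'_self]
  have hgs_real (x : ℝ) (hx : emb x ∈ Ω) :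
      gs (emb x) = emb (inner' (g (emb x)) (g (emb x))) := by
    rw [hgs0 x hx, mul'_conj'_self]
  refine hfs.eq_mul'_of_real hΩ hgs hps (fun x hx => ⟨_, hfs_real x hx⟩)
    (fun x hx => ⟨_, hgs_real x hx⟩) (fun x hx => ?_) hw
  rw [hps0 x hx, hprod x hx, mul'_conj'_self, inner'_mul'_self, hfs_real x hx, hgs_real x hx,
    mul'_emb_emb]

open Octo in
/-- The symmetrization of a regular product is the (commuting) pointwise product of the
symmetrizations: (f∗g)^s = f^s g^s = g^s f^s.  Here p = f∗g, and fs, gs, ps are the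
symmetrizations of f, g, p, each characterized as the slice regular function agreeing on
the reals with the corresponding pointwise expression. -/
theorem symmetrization_regular_product (Ω : Set Octo) (hΩ : SymSliceDomain Ω)
    (f g p fs gs ps : Octo → Octo)
    (hf : SliceRegular Ω f) (hg : SliceRegular Ω g) (hp : SliceRegular Ω p)
    (hfs : SliceRegular Ω fs) (hgs : SliceRegular Ω gs) (hps : SliceRegular Ω ps)
    (hf0 : ¬ ∀ z ∈ Ω, f z = 0) (hg0 : ¬ ∀ z ∈ Ω, g z = 0)
    (hprod : ∀ x : ℝ, emb x ∈ Ω → p (emb x) = mul' (f (emb x)) (g (emb x)))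
    (hfs0 : ∀ x : ℝ, emb x ∈ Ω → fs (emb x) = mul' (f (emb x)) (conj' (f (emb x))))
    (hgs0 : ∀ x : ℝ, emb x ∈ Ω → gs (emb x) = mul' (g (emb x)) (conj' (g (emb x))))
    (hps0 : ∀ x : ℝ, emb x ∈ Ω → ps (emb x) = mul' (p (emb x)) (conj' (p (emb x)))) :
    ∀ w ∈ Ω, ps w = mul' (fs w) (gs w) ∧ mul' (fs w) (gs w) = mul' (gs w) (fs w) :=
  symmetrization_regular_product_general Ω hΩ f g p fs gs ps hfs hgs hps hprod hfs0 hgs0 hps0
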